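/- arXiv:1304.6255 — 2 statements merged into one kernel-verified Lean document; each statement's English description precedes it below -/
import Mathlib

section
/- Let G be a connected P₅-free graph with an efficient dominating set D, let v ∈ D, and let Nᵢ denote the set of vertices at distance i from v. Then Nᵢ = ∅ for all i > 3, and for every edge yz of the induced subgraph G[N₃], N(y) ∩ N₂ = N(z) ∩ N₂. -/
/-!
Walking back along a shortest path from `v` to a vertex at distance `≥ 4` produces five vertices
whose distances from `v` differ by at least two whenever they are not consecutive, so they induce
a `P₅`. Likewise, if `y z ∈ N₃` are adjacent and `x ∈ N₂` is adjacent to `y` but not to `z`, then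
`z, y, x` followed by a shortest path from `x` back to `v` is an induced `P₅`.
-/

open SimpleGraph

/-- `D` is an efficient dominating set. -/
def IsEffDomSet {V : Type*} (G : SimpleGraph V) (D : Set V) : Prop :=
  ∀ u : V, ∃! d : V, d ∈ D ∧ (d = u ∨ G.Adj d u)

namespace SimpleGraph

variable {V : Type*} {G : SimpleGraph V}

lemma nonempty_pathGraph_five_embedding {a b c d e : V}
    (hab : G.Adj a b) (hbc : G.Adj b c) (hcd : G.Adj c d) (hde : G.Adj d e)
    (hac : ¬G.Adj a c) (had : ¬G.Adj a d) (hae : ¬G.Adj a e)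
    (hbd : ¬G.Adj b d) (hbe : ¬G.Adj b e) (hce : ¬G.Adj c e) :
    Nonempty (pathGraph 5 ↪g G) := by
  set f : Fin 5 → V := ![a, b, c, d, e]
  have hf : ∀ i j, G.Adj (f i) (f j) ↔ (pathGraph 5).Adj i j := by
    intro i j
    fin_cases i <;> fin_cases j <;> simp [f, pathGraph_adj, G.adj_comm, *]
  -- distinct vertices of `P₅` have distinct neighbourhoods, so `f` is injective
  have twin_free : ∀ i j : Fin 5,
      (∀ k, (pathGraph 5).Adj k i ↔ (pathGraph 5).Adj k j) → i = j := by
    simp only [pathGraph_adj]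
    decide
  exact ⟨⟨⟨f, fun i j hij => twin_free i j fun k => by rw [← hf, ← hf, hij]⟩, hf _ _⟩⟩

lemma exists_adj_dist_eq_of_dist_eq_add_one {u w : V} {n : ℕ} (h : G.dist u w = n + 1) :
    ∃ x, G.Adj x w ∧ G.dist u x = n := by
  obtain ⟨p, hp⟩ := exists_walk_of_dist_ne_zero (by omega : G.dist u w ≠ 0)
  have hwu : w ≠ u := by
    rintro rfl
    simp at h
  obtain ⟨x, hwx, q, hq⟩ := p.reverse.exists_eq_cons_of_ne hwu
  have hq_length : q.length = n := by
    have := congrArg Walk.length hq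
    simp only [Walk.length_reverse, Walk.length_cons, hp, h] at this
    omega
  have hle : G.dist u x ≤ n := by
    simpa [dist_comm, hq_length] using dist_le q
  have hge : n + 1 ≤ G.dist u x + 1 := by
    calc n + 1 = G.dist u w := h.symm
      _ ≤ G.dist u x + G.dist x w := q.reverse.reachable.dist_triangle_left w
      _ = G.dist u x + 1 := by rw [dist_eq_one_iff_adj.mpr hwx.symm]
  exact ⟨x, hwx.symm, by omega⟩

lemma not_adj_of_dist_add_two_le {u a b : V} (h : G.dist u a + 2 ≤ G.dist u b) :
    ¬G.Adj a b := fun hab => by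
  rcases hab.diff_dist_adj (u := u) with h' | h' | h' <;> omega

lemma nonempty_pathGraph_five_embedding_of_four_le_dist {u w : V} (h : 4 ≤ G.dist u w) :
    Nonempty (pathGraph 5 ↪g G) := by
  obtain ⟨d, hd⟩ : ∃ d, G.dist u w = d + 3 + 1 := ⟨G.dist u w - 4, by omega⟩
  obtain ⟨x₃, h₃₄, hx₃ : G.dist u x₃ = d + 2 + 1⟩ := exists_adj_dist_eq_of_dist_eq_add_one hd
  obtain ⟨x₂, h₂₃, hx₂ : G.dist u x₂ = d + 1 + 1⟩ := exists_adj_dist_eq_of_dist_eq_add_one hx₃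
  obtain ⟨x₁, h₁₂, hx₁⟩ := exists_adj_dist_eq_of_dist_eq_add_one hx₂
  obtain ⟨x₀, h₀₁, hx₀⟩ := exists_adj_dist_eq_of_dist_eq_add_one hx₁
  have far {a b : V} : G.dist u a + 2 ≤ G.dist u b → ¬G.Adj a b := not_adj_of_dist_add_two_le
  exact nonempty_pathGraph_five_embedding h₀₁ h₁₂ h₂₃ h₃₄
    (far (by omega)) (far (by omega)) (far (by omega)) (far (by omega)) (far (by omega))
    (far (by omega))

lemma nonempty_pathGraph_five_embedding_of_not_adj {u x y z : V} (hx : G.dist u x = 2)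
    (hy : 3 ≤ G.dist u y) (hz : 3 ≤ G.dist u z) (hyz : G.Adj y z) (hxy : G.Adj x y)
    (hxz : ¬G.Adj x z) : Nonempty (pathGraph 5 ↪g G) := by
  obtain ⟨x₁, h₁x, hx₁⟩ := exists_adj_dist_eq_of_dist_eq_add_one (n := 1) hx
  obtain ⟨x₀, h₀₁, hx₀⟩ := exists_adj_dist_eq_of_dist_eq_add_one (n := 0) hx₁
  have far {a b : V} : G.dist u a + 2 ≤ G.dist u b → ¬G.Adj a b := not_adj_of_dist_add_two_le
  exact nonempty_pathGraph_five_embedding h₀₁ h₁x hxy hyz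
    (far (by omega)) (far (by omega)) (far (by omega)) (far (by omega)) (far (by omega)) hxz

end SimpleGraph

theorem stmt8_general {V : Type*} (G : SimpleGraph V)
    (hfree : IsEmpty (SimpleGraph.pathGraph 5 ↪g G))
    (v : V)
    (N : ℕ → Set V) (hN : ∀ i, N i = {w | G.dist v w = i}) :
    (∀ i, 3 < i → N i = ∅) ∧
    (∀ y z : V, y ∈ N 3 → z ∈ N 3 → G.Adj y z →
      {x | G.Adj y x ∧ x ∈ N 2} = {x | G.Adj z x ∧ x ∈ N 2}) := by
  obtain rfl : N = fun i => {w | G.dist v w = i} := funext hN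
  have adj_of_adj {y z x : V} (hy : G.dist v y = 3) (hz : G.dist v z = 3) (hyz : G.Adj y z)
      (hx : G.dist v x = 2) (hyx : G.Adj y x) : G.Adj z x := by
    by_contra hzx
    exact (nonempty_pathGraph_five_embedding_of_not_adj hx hy.ge hz.ge hyz hyx.symm
      fun h => hzx h.symm).elim hfree.elim
  refine ⟨fun i hi => Set.eq_empty_of_forall_notMem fun w hw => ?_,
    fun y z hy hz hyz => Set.ext fun x => ?_⟩
  · have hw : G.dist v w = i := hw
    exact (nonempty_pathGraph_five_embedding_of_four_le_dist (u := v) (w := w)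
      (by omega)).elim hfree.elim
  · exact ⟨fun ⟨hyx, hx⟩ => ⟨adj_of_adj hy hz hyz hx hyx, hx⟩,
      fun ⟨hzx, hx⟩ => ⟨adj_of_adj hz hy hyz.symm hx hzx, hx⟩⟩

theorem stmt8 {V : Type*} [Fintype V] (G : SimpleGraph V) (hG : G.Connected)
    (hfree : IsEmpty (SimpleGraph.pathGraph 5 ↪g G))
    (D : Set V) (hD : IsEffDomSet G D) (v : V) (hv : v ∈ D)
    (N : ℕ → Set V) (hN : ∀ i, N i = {w | G.dist v w = i}) :
    (∀ i, 3 < i → N i = ∅) ∧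
    (∀ y z : V, y ∈ N 3 → z ∈ N 3 → G.Adj y z →
      {x | G.Adj y x ∧ x ∈ N 2} = {x | G.Adj z x ∧ x ∈ N 2}) :=
  stmt8_general G hfree v N hN
end

section
/- Let G be a connected {P₆, S₁,₂,₂}-free graph with efficient dominating set D, v ∈ D, and distance levels Nᵢ. If x ∈ N₂ is adjacent to d ∈ D ∩ N₃, then N(x) ∩ N₃ ⊆ N(d) ∩ N₃ ∪ {d}. -/
/-!
Suppose `r ∈ N(x) ∩ N₃` is neither `d` nor a neighbour of `d`. Take a common neighbour `y` of
`v` and `x`, and the vertex `d' ∈ D` dominating `r` (it is not `r` itself, since then `x` would be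
dominated by both `r` and `d`). Distances from `v` and the efficiency of `D` exclude every edge
among `v, y, x, r, d', d` other than those of the path `v y x r d'` and the edge `x d`, so these
six vertices induce an `S₁,₂,₂`.
-/

open SimpleGraph

/-- `S₁,₂,₂`: a chordless path 0-1-2-3-4 plus a vertex 5 adjacent only to 2. -/
def S122 : SimpleGraph (Fin 6) :=
  SimpleGraph.fromEdgeSet {s(0, 1), s(1, 2), s(2, 3), s(3, 4), s(2, 5)}

namespace SimpleGraph

variable {V W : Type*} {G : SimpleGraph V}

theorem Adj.dist_le_dist_add_one {a b : V} (h : G.Adj a b) (u : V) :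
    G.dist u b ≤ G.dist u a + 1 := by
  simpa [dist_eq_one_iff_adj.mpr h] using h.reachable.dist_triangle_right u

theorem exists_adj_adj_of_dist_eq_two {u w : V} (h : G.dist u w = 2) :
    ∃ y, G.Adj u y ∧ G.Adj y w := by
  have hreach : G.Reachable u w := Reachable.of_dist_ne_zero (by omega)
  have hedist : G.edist u w = 2 := by rw [← hreach.coe_dist_eq_edist, h]; rfl
  obtain ⟨y, hy⟩ := (edist_eq_two_iff.mp hedist).2.2
  exact ⟨y, (G.mem_commonNeighbors.mp hy).1, (G.mem_commonNeighbors.mp hy).2.symm⟩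

def Embedding.ofAdjIff {H : SimpleGraph W}
    (hH : ∀ a b, (∀ c, H.Adj a c ↔ H.Adj b c) → a = b)
    (f : W → V) (hf : ∀ a b, G.Adj (f a) (f b) ↔ H.Adj a b) : H ↪g G where
  toFun := f
  inj' a b hab := hH a b fun c => by rw [← hf, ← hf, hab]
  map_rel_iff' := hf _ _

end SimpleGraph

instance : DecidableRel S122.Adj := fun a b =>
  decidable_of_iff
    (s(a, b) ∈ ({s(0, 1), s(1, 2), s(2, 3), s(3, 4), s(2, 5)} : Finset (Sym2 (Fin 6))) ∧ a ≠ b)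
    (by simp [S122])

theorem S122_eq_of_adj_iff_adj : ∀ a b : Fin 6, (∀ c, S122.Adj a c ↔ S122.Adj b c) → a = b := by
  decide

theorem nonempty_embedding_S122 {V : Type*} {G : SimpleGraph V} {a₀ a₁ a₂ a₃ a₄ a₅ : V}
    (h01 : G.Adj a₀ a₁) (h12 : G.Adj a₁ a₂) (h23 : G.Adj a₂ a₃) (h34 : G.Adj a₃ a₄)
    (h25 : G.Adj a₂ a₅)
    (n02 : ¬G.Adj a₀ a₂) (n03 : ¬G.Adj a₀ a₃) (n04 : ¬G.Adj a₀ a₄) (n05 : ¬G.Adj a₀ a₅)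
    (n13 : ¬G.Adj a₁ a₃) (n14 : ¬G.Adj a₁ a₄) (n15 : ¬G.Adj a₁ a₅) (n24 : ¬G.Adj a₂ a₄)
    (n35 : ¬G.Adj a₃ a₅) (n45 : ¬G.Adj a₄ a₅) :
    Nonempty (S122 ↪g G) := by
  refine ⟨Embedding.ofAdjIff S122_eq_of_adj_iff_adj ![a₀, a₁, a₂, a₃, a₄, a₅] fun i j => ?_⟩
  -- the `adj_comm` rewrites orient every pair as `aᵢ aⱼ` with `i < j`, as in the hypotheses
  fin_cases i <;> fin_cases j <;>
    simp [G.adj_comm _ a₀, G.adj_comm a₂ a₁, G.adj_comm a₃ a₂, G.adj_comm a₄ a₃, G.adj_comm a₅,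
      G.adj_comm a₃ a₁, G.adj_comm a₄ a₁, G.adj_comm a₄ a₂, S122, *]

namespace IsEffDomSet

variable {V : Type*} {G : SimpleGraph V} {D : Set V}

theorem eq_of_dominate (hD : IsEffDomSet G D) {u a b : V} (ha : a ∈ D) (hau : a = u ∨ G.Adj a u)
    (hb : b ∈ D) (hbu : b = u ∨ G.Adj b u) : a = b :=
  (hD u).unique ⟨ha, hau⟩ ⟨hb, hbu⟩

theorem eq_of_adj_of_adj (hD : IsEffDomSet G D) {u a b : V} (ha : a ∈ D) (hb : b ∈ D)
    (hau : G.Adj a u) (hbu : G.Adj b u) : a = b :=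
  hD.eq_of_dominate ha (.inr hau) hb (.inr hbu)

theorem not_adj (hD : IsEffDomSet G D) {a b : V} (ha : a ∈ D) (hb : b ∈ D) : ¬G.Adj a b :=
  fun h => h.ne (hD.eq_of_dominate ha (.inr h) hb (.inl rfl))

end IsEffDomSet

theorem stmt12_general {V : Type*} (G : SimpleGraph V)
    (hSfree : IsEmpty (S122 ↪g G))
    (D : Set V) (hD : IsEffDomSet G D) (v : V) (hv : v ∈ D)
    (x d : V) (hx : G.dist v x = 2) (hdD : d ∈ D) (hd3 : G.dist v d = 3)
    (hxd : G.Adj x d) :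
    ∀ r, G.Adj x r → G.dist v r = 3 → (G.Adj d r ∨ r = d) := by
  intro r hxr hr3
  by_contra! ⟨hdr, hrd⟩
  obtain ⟨y, hvy, hyx⟩ := exists_adj_adj_of_dist_eq_two hx
  obtain ⟨d', ⟨hd'D, hdom⟩, -⟩ := hD r
  have hd'r : G.Adj d' r := hdom.resolve_left <| by
    rintro rfl
    exact hrd (hD.eq_of_adj_of_adj hd'D hdD hxr.symm hxd.symm)
  have not_adj_v : ∀ w, 2 ≤ G.dist v w → ¬G.Adj v w := fun w hw h => by
    rw [dist_eq_one_iff_adj.mpr h] at hw; omega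
  have not_adj_y : ∀ w, G.dist v w = 3 → ¬G.Adj y w := fun w hw h => by
    have := h.dist_le_dist_add_one v
    rw [dist_eq_one_iff_adj.mpr hvy] at this; omega
  exact hSfree.false (nonempty_embedding_S122 hvy hyx hxr hd'r.symm hxd
    (not_adj_v x (by omega)) (not_adj_v r (by omega)) (hD.not_adj hv hd'D)
    (not_adj_v d (by omega)) (not_adj_y r hr3)
    (fun h => not_adj_v r (by omega) (hD.eq_of_adj_of_adj hv hd'D hvy h.symm ▸ hd'r))
    (not_adj_y d hd3)
    (fun h => hdr (hD.eq_of_adj_of_adj hdD hd'D hxd.symm h.symm ▸ hd'r))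
    (fun h => hdr h.symm) (hD.not_adj hd'D hdD)).some

theorem stmt12 {V : Type*} [Fintype V] (G : SimpleGraph V) (hG : G.Connected)
    (hP6free : IsEmpty (SimpleGraph.pathGraph 6 ↪g G))
    (hSfree : IsEmpty (S122 ↪g G))
    (D : Set V) (hD : IsEffDomSet G D) (v : V) (hv : v ∈ D)
    (x d : V) (hx : G.dist v x = 2) (hdD : d ∈ D) (hd3 : G.dist v d = 3)
    (hxd : G.Adj x d) :
    ∀ r, G.Adj x r → G.dist v r = 3 → (G.Adj d r ∨ r = d) :=
  stmt12_general G hSfree D hD v hv x d hx hdD hd3 hxd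
end
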